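/- If a radial density ρ supported in an annulus satisfies the integral equation U⋆ρ = D + (α/β)(ln|x| - φ(|x|)) on supp ρ for some constant D, then the pair (ρ, u) with u(x) = √(α/β)x^⊥/|x| is a stationary solution of the hydrodynamic system ∇·(ρu) = 0, (u·∇)u = -∇(U⋆ρ) - (|u|²I - u⊗u)∇φ on supp ρ. -/

import Mathlib

/-!
The velocity is `u = H • x^⊥` with the radial factor `H = √(α/β)/|x|`. A radial function has zero
derivative along `x^⊥`, so a rotational field `H • x^⊥` with radial `H` is divergence free (also
after multiplying by the radial `ρ`), satisfies `(u·∇)u = H² (x^⊥)^⊥ = -H² x`, and is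
orthogonal to `∇φ`. On the open set `supp ρ` the integral equation gives
`∇(U⋆ρ) = (α/β)(x/|x|² - ∇φ)`, and since `|u|² = α/β` both sides of the momentum equation equal
`-(α/β) x/|x|²`.
-/

open MeasureTheory

/-- The perpendicular vector `x^⊥ = (-x₂, x₁)` in ℝ². -/
noncomputable def perp (x : EuclideanSpace ℝ (Fin 2)) : EuclideanSpace ℝ (Fin 2) :=
  WithLp.toLp 2 (fun i : Fin 2 => if i = 0 then -x 1 else x 0)

open Filter Topology
open scoped RealInnerProductSpace

local notation "ℝ²" => EuclideanSpace ℝ (Fin 2)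

section InnerProductSpace

variable {E F : Type*} [NormedAddCommGroup E] [InnerProductSpace ℝ E]
  [NormedAddCommGroup F] [NormedSpace ℝ F]

theorem norm_add_smul_eq_norm_sub_smul {x v : E} (hxv : ⟪x, v⟫ = 0) (t : ℝ) :
    ‖x + t • v‖ = ‖x - t • v‖ := by
  have h : ‖x + t • v‖ ^ 2 = ‖x - t • v‖ ^ 2 := by
    rw [norm_add_sq_real, norm_sub_sq_real, real_inner_smul_right, hxv]
    ring
  exact (pow_left_inj₀ (norm_nonneg _) (norm_nonneg _) two_ne_zero).mp h

/-- `t ↦ f (x + t • v)` is even. -/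
theorem fderiv_apply_eq_zero_of_radial {f : E → F} {g : ℝ → F} (hf : ∀ y, f y = g ‖y‖)
    {x v : E} (hxv : ⟪x, v⟫ = 0) (hfx : DifferentiableAt ℝ f x) : fderiv ℝ f x v = 0 := by
  have hline : ∀ w : E, HasDerivAt (fun t : ℝ => f (x + t • w)) (fderiv ℝ f x w) 0 := by
    intro w
    have hγ : HasDerivAt (fun t : ℝ => x + t • w) w 0 := by
      simpa using ((hasDerivAt_id (0 : ℝ)).smul_const w).const_add x
    exact (by simpa using hfx.hasFDerivAt : HasFDerivAt f (fderiv ℝ f x) (x + (0 : ℝ) • w))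
      |>.comp_hasDerivAt 0 hγ
  have heven : (fun t : ℝ => f (x + t • v)) = fun t => f (x + t • -v) := by
    ext t
    rw [hf, hf, smul_neg, ← sub_eq_add_neg, norm_add_smul_eq_norm_sub_smul hxv]
  have h := (hline v).unique (heven ▸ hline (-v))
  rw [map_neg, eq_neg_iff_add_eq_zero, ← two_smul ℝ] at h
  exact (smul_eq_zero.mp h).resolve_left two_ne_zero

theorem hasGradientAt_log_norm [CompleteSpace E] {x : E} (hx : x ≠ 0) :
    HasGradientAt (fun z => Real.log ‖z‖) ((‖x‖ ^ 2)⁻¹ • x) x := by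
  have hsq : HasFDerivAt (fun z : E => Real.log (‖z‖ ^ 2)) ((‖x‖ ^ 2)⁻¹ • 2 • innerSL ℝ x) x :=
    (hasStrictFDerivAt_norm_sq x).hasFDerivAt.log (by positivity)
  have hlog : (fun z : E => Real.log ‖z‖) = fun z => 2⁻¹ * Real.log (‖z‖ ^ 2) := by
    ext z; rw [Real.log_pow]; push_cast; ring
  rw [hasGradientAt_iff_hasFDerivAt, hlog]
  refine (hsq.const_mul 2⁻¹).congr_fderiv ?_
  ext v
  simp only [smul_apply, InnerProductSpace.toDual_apply_apply,
    innerSL_apply_apply, real_inner_smul_left, smul_eq_mul, nsmul_eq_mul, Nat.cast_ofNat]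
  ring

theorem differentiableAt_const_div_norm (c : ℝ) {x : E} (hx : x ≠ 0) :
    DifferentiableAt ℝ (fun y : E => c / ‖y‖) x := by
  simpa only [div_eq_mul_inv, Pi.inv_apply, id] using
    (((differentiableAt_id (x := x)).norm ℝ hx).inv (norm_ne_zero_iff.mpr hx)).const_mul c

theorem gradient_const_add_mul_log_norm_sub [CompleteSpace E] (D a : ℝ) {φ : E → ℝ} {x : E}
    (hφ : DifferentiableAt ℝ φ x) (hx : x ≠ 0) :
    gradient (fun z => D + a * (Real.log ‖z‖ - φ z)) x =
      a • ((‖x‖ ^ 2)⁻¹ • x - gradient φ x) := by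
  have hF := (((hasGradientAt_log_norm hx).hasFDerivAt.fun_sub hφ.hasFDerivAt).const_mul
    a).const_add D
  refine ext_inner_right ℝ fun v => ?_
  rw [inner_gradient_left, hF.fderiv]
  simp [inner_sub_left, real_inner_smul_left]

end InnerProductSpace

theorem EuclideanSpace.fderiv_apply_apply {ι E : Type*} [Fintype ι] [NormedAddCommGroup E]
    [NormedSpace ℝ E] {G : E → EuclideanSpace ℝ ι} {x : E} (hG : DifferentiableAt ℝ G x)
    (i : ι) (v : E) : fderiv ℝ (fun y => G y i) x v = fderiv ℝ G x v i :=
  congrArg (· v) ((PiLp.hasFDerivAt_apply 2 (G x) i).comp x hG.hasFDerivAt).fderiv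

theorem EuclideanSpace.sum_map_single_mul {ι : Type*} [Fintype ι] [DecidableEq ι]
    (L : EuclideanSpace ℝ ι →L[ℝ] ℝ) (w : EuclideanSpace ℝ ι) :
    ∑ i, L (EuclideanSpace.single i 1) * w i = L w := by
  conv_rhs => rw [← (EuclideanSpace.basisFun ι ℝ).sum_repr w]
  simp [mul_comm]

section Perp

@[simp] theorem perp_apply_zero (x : ℝ²) : perp x 0 = -x 1 := by simp [perp]
@[simp] theorem perp_apply_one (x : ℝ²) : perp x 1 = x 0 := by simp [perp]

theorem inner_self_perp (x : ℝ²) : ⟪x, perp x⟫ = 0 := by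
  simp [PiLp.inner_apply, Fin.sum_univ_two]
  ring

theorem norm_perp (x : ℝ²) : ‖perp x‖ = ‖x‖ := by
  simp [EuclideanSpace.norm_eq, Fin.sum_univ_two, add_comm]

theorem perp_perp (x : ℝ²) : perp (perp x) = -x := by
  ext i; fin_cases i <;> simp

noncomputable def perpL : ℝ² →L[ℝ] ℝ² :=
  LinearMap.toContinuousLinearMap
    { toFun := perp
      map_add' := fun x y => by ext i; fin_cases i <;> simp [add_comm]
      map_smul' := fun a x => by ext i; fin_cases i <;> simp }

@[simp] theorem perpL_apply (x : ℝ²) : perpL x = perp x := rfl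

theorem sum_perp_single_apply : ∑ i, perp (EuclideanSpace.single i (1 : ℝ)) i = 0 := by
  simp [Fin.sum_univ_two]

end Perp

section RotationalField

variable {H : ℝ² → ℝ} {x : ℝ²}

theorem hasFDerivAt_smul_perp (hHx : DifferentiableAt ℝ H x) :
    HasFDerivAt (fun y => H y • perp y) (H x • perpL + (fderiv ℝ H x).smulRight (perp x)) x :=
  hHx.hasFDerivAt.smul perpL.hasFDerivAt

variable {h : ℝ → ℝ} (hH : ∀ y, H y = h ‖y‖) (hHx : DifferentiableAt ℝ H x)
include hH hHx

theorem sum_fderiv_smul_perp_apply_single :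
    ∑ i, fderiv ℝ (fun y => (H y • perp y) i) x (EuclideanSpace.single i 1) = 0 := by
  have hG := hasFDerivAt_smul_perp hHx
  simp_rw [EuclideanSpace.fderiv_apply_apply hG.differentiableAt]
  simp only [hG.fderiv, add_apply, smul_apply, perpL_apply,
    ContinuousLinearMap.smulRight_apply, PiLp.add_apply, PiLp.smul_apply, smul_eq_mul,
    Finset.sum_add_distrib, ← Finset.mul_sum, sum_perp_single_apply, mul_zero, zero_add,
    EuclideanSpace.sum_map_single_mul]
  exact fderiv_apply_eq_zero_of_radial hH (inner_self_perp x) hHx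

theorem fderiv_smul_perp_apply_self :
    fderiv ℝ (fun y => H y • perp y) x (H x • perp x) = -(H x ^ 2) • x := by
  have hH' : fderiv ℝ H x (perp x) = 0 :=
    fderiv_apply_eq_zero_of_radial hH (inner_self_perp x) hHx
  simp only [(hasFDerivAt_smul_perp hHx).fderiv, map_smul, add_apply, smul_apply, perpL_apply,
    ContinuousLinearMap.smulRight_apply, hH', zero_smul, add_zero, perp_perp, smul_neg, smul_smul,
    sq, neg_smul]

variable {u : ℝ² → ℝ²} (hu : u =ᶠ[𝓝 x] fun y => H y • perp y)
include hu

theorem sum_fderiv_mul_apply_single_eq_zero {ρ : ℝ² → ℝ} {ρt : ℝ → ℝ}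
    (hρ : ∀ y, ρ y = ρt ‖y‖) (hρx : DifferentiableAt ℝ ρ x) :
    ∑ i, fderiv ℝ (fun y => ρ y * u y i) x (EuclideanSpace.single i 1) = 0 := by
  rw [← sum_fderiv_smul_perp_apply_single (H := fun y => ρ y * H y)
    (h := fun r => ρt r * h r) (fun y => by rw [hρ, hH]) (hρx.mul hHx)]
  refine Finset.sum_congr rfl fun i _ => ?_
  congr 1
  refine EventuallyEq.fderiv_eq ?_
  filter_upwards [hu] with y hy
  simp [hy, mul_assoc]

theorem toLp_fderiv_apply_self_eq :
    (WithLp.toLp 2 (fun i => fderiv ℝ (fun y => u y i) x (u x)) : ℝ²) = -(H x ^ 2) • x := by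
  have hud : DifferentiableAt ℝ u x :=
    (hasFDerivAt_smul_perp hHx).differentiableAt.congr_of_eventuallyEq hu
  ext i
  rw [PiLp.toLp_apply, EuclideanSpace.fderiv_apply_apply hud, hu.fderiv_eq, hu.eq_of_nhds,
    fderiv_smul_perp_apply_self hH hHx]

end RotationalField

theorem stmt7_general (α β : ℝ) (hα : 0 < α) (hβ : 0 < β)
    (U : EuclideanSpace ℝ (Fin 2) → ℝ)
    (φ : EuclideanSpace ℝ (Fin 2) → ℝ) (hφ : ContDiff ℝ 1 φ)
    (φt : ℝ → ℝ) (hφrad : ∀ x, φ x = φt ‖x‖)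
    (ρ : EuclideanSpace ℝ (Fin 2) → ℝ) (hρ : ContDiff ℝ 1 ρ)
    (ρt : ℝ → ℝ) (hρrad : ∀ x, ρ x = ρt ‖x‖)
    (r₁ r₂ : ℝ) (hr₁ : 0 < r₁)
    (hsupp : ∀ x ∈ Function.support ρ, r₁ ≤ ‖x‖ ∧ ‖x‖ ≤ r₂)
    (D : ℝ)
    (hint : ∀ x ∈ Function.support ρ,
      (∫ y, U (x - y) * ρ y) = D + (α / β) * (Real.log ‖x‖ - φt ‖x‖))
    (u : EuclideanSpace ℝ (Fin 2) → EuclideanSpace ℝ (Fin 2))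
    (hu : ∀ x, x ≠ 0 → u x = (Real.sqrt (α / β) / ‖x‖) • perp x) :
    ∀ x ∈ Function.support ρ,
      ((∑ i, fderiv ℝ (fun y => ρ y * u y i) x (EuclideanSpace.single i 1)) = 0) ∧
      ((WithLp.toLp 2 (fun i => fderiv ℝ (fun y => u y i) x (u x)) : EuclideanSpace ℝ (Fin 2)) =
        -gradient (fun z => ∫ y, U (z - y) * ρ y) x -
          (‖u x‖ ^ 2 • gradient φ x - (inner ℝ (u x) (gradient φ x) : ℝ) • u x)) := by
  intro x hx
  have hx0 : x ≠ 0 := norm_pos_iff.mp (hr₁.trans_le (hsupp x hx).1)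
  set c := Real.sqrt (α / β)
  have hc : c ^ 2 = α / β := Real.sq_sqrt (by positivity)
  have hH : ∀ y : ℝ², c / ‖y‖ = (fun r => c / r) ‖y‖ := fun _ => rfl
  have hHx := differentiableAt_const_div_norm c hx0
  have huH : u =ᶠ[𝓝 x] fun y => (c / ‖y‖) • perp y :=
    (eventually_ne_nhds hx0).mono fun y hy => hu y hy
  have hφx : DifferentiableAt ℝ φ x := hφ.differentiable one_ne_zero x
  refine ⟨sum_fderiv_mul_apply_single_eq_zero hH hHx huH hρrad
    (hρ.differentiable one_ne_zero x), ?_⟩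
  have hconv : (fun z => ∫ y, U (z - y) * ρ y) =ᶠ[𝓝 x]
      fun z => D + (α / β) * (Real.log ‖z‖ - φ z) := by
    filter_upwards [(hρ.continuous.isOpen_support).mem_nhds hx] with z hz
    rw [hint z hz, hφrad]
  have hnorm : ‖u x‖ ^ 2 = α / β := by
    rw [hu x hx0, norm_smul, norm_perp, Real.norm_eq_abs, abs_div, abs_norm,
      div_mul_cancel₀ _ (norm_ne_zero_iff.mpr hx0), sq_abs, hc]
  have hinner : ⟪u x, gradient φ x⟫ = 0 := by
    rw [hu x hx0, inner_gradient_right, map_smul,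
      fderiv_apply_eq_zero_of_radial hφrad (inner_self_perp x) hφx, smul_zero, map_zero]
  rw [toLp_fderiv_apply_self_eq hH hHx huH, hconv.gradient_eq,
    gradient_const_add_mul_log_norm_sub D _ hφx hx0, hnorm, hinner, zero_smul, sub_zero,
    div_pow, hc]
  module

/-- If a radial density `ρ` supported in an annulus (not containing the origin) satisfies
`U⋆ρ = D + (α/β)(ln|x| - φ(|x|))` on `supp ρ`, then `(ρ, u)` with `u = √(α/β) x^⊥/|x|`
is a stationary solution of the hydrodynamic system: `∇·(ρu) = 0` and
`(u·∇)u = -∇(U⋆ρ) - (|u|²I - u⊗u)∇φ` on `supp ρ`. -/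
theorem stmt7 (α β : ℝ) (hα : 0 < α) (hβ : 0 < β)
    (U : EuclideanSpace ℝ (Fin 2) → ℝ) (hU : ContDiff ℝ 2 U)
    (Ut : ℝ → ℝ) (hUrad : ∀ x, U x = Ut ‖x‖)
    (φ : EuclideanSpace ℝ (Fin 2) → ℝ) (hφ : ContDiff ℝ 1 φ)
    (φt : ℝ → ℝ) (hφrad : ∀ x, φ x = φt ‖x‖)
    (ρ : EuclideanSpace ℝ (Fin 2) → ℝ) (hρ : ContDiff ℝ 1 ρ) (hρpos : ∀ x, 0 ≤ ρ x)
    (ρt : ℝ → ℝ) (hρrad : ∀ x, ρ x = ρt ‖x‖)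
    (r₁ r₂ : ℝ) (hr₁ : 0 < r₁) (hr₁₂ : r₁ < r₂)
    (hsupp : ∀ x ∈ Function.support ρ, r₁ ≤ ‖x‖ ∧ ‖x‖ ≤ r₂)
    (D : ℝ)
    (hint : ∀ x ∈ Function.support ρ,
      (∫ y, U (x - y) * ρ y) = D + (α / β) * (Real.log ‖x‖ - φt ‖x‖))
    (u : EuclideanSpace ℝ (Fin 2) → EuclideanSpace ℝ (Fin 2))
    (hu : ∀ x, x ≠ 0 → u x = (Real.sqrt (α / β) / ‖x‖) • perp x) :
    ∀ x ∈ Function.support ρ,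
      ((∑ i, fderiv ℝ (fun y => ρ y * u y i) x (EuclideanSpace.single i 1)) = 0) ∧
      ((WithLp.toLp 2 (fun i => fderiv ℝ (fun y => u y i) x (u x)) : EuclideanSpace ℝ (Fin 2)) =
        -gradient (fun z => ∫ y, U (z - y) * ρ y) x -
          (‖u x‖ ^ 2 • gradient φ x - (inner ℝ (u x) (gradient φ x) : ℝ) • u x)) :=
  stmt7_general α β hα hβ U φ hφ φt hφrad ρ hρ ρt hρrad r₁ r₂ hr₁ hsupp D hint u hu
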